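/- The polynomial g(x0,x1,y0,y1,z0,z1) = x0·y1 + x0·z1 + x1·y0 + x1·y1·z0 + x1·y1·z1 + y0·z0 over ℂ has a unique critical point, namely the origin. -/
import Mathlib

/-- g(x0,x1,y0,y1,z0,z1) = x0*y1 + x0*z1 + x1*y0 + x1*y1*z0 + x1*y1*z1 + y0*z0,
coords (x0,x1,y0,y1,z0,z1) = (p 0,…,p 5). -/
noncomputable def g2 : (Fin 6 → ℂ) → ℂ :=
  fun p => p 0 * p 3 + p 0 * p 5 + p 1 * p 2 + p 1 * p 3 * p 4 + p 1 * p 3 * p 5 + p 2 * p 4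

noncomputable def pr (i : Fin 6) : (Fin 6 → ℂ) →L[ℂ] ℂ :=
  ContinuousLinearMap.proj i

lemma hp (p : Fin 6 → ℂ) (i : Fin 6) : HasFDerivAt (fun q : Fin 6 → ℂ => q i) (pr i) p :=
  (pr i).hasFDerivAt

noncomputable def D2 (p : Fin 6 → ℂ) : (Fin 6 → ℂ) →L[ℂ] ℂ :=
  ((((p 0 • pr 3 + p 3 • pr 0) + (p 0 • pr 5 + p 5 • pr 0)) + (p 1 • pr 2 + p 2 • pr 1)
    + ((p 1 * p 3) • pr 4 + p 4 • (p 1 • pr 3 + p 3 • pr 1)))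
    + ((p 1 * p 3) • pr 5 + p 5 • (p 1 • pr 3 + p 3 • pr 1)))
    + (p 2 • pr 4 + p 4 • pr 2)

lemma hg (p : Fin 6 → ℂ) : HasFDerivAt g2 (D2 p) p := by
  exact ((((((hp p 0).mul (hp p 3)).add ((hp p 0).mul (hp p 5))).add
    ((hp p 1).mul (hp p 2))).add (((hp p 1).mul (hp p 3)).mul (hp p 4))).add
    (((hp p 1).mul (hp p 3)).mul (hp p 5))).add ((hp p 2).mul (hp p 4))

/-- g has a unique critical point, the origin. -/
theorem stmt_2 : {p : Fin 6 → ℂ | fderiv ℂ g2 p = 0} = {0} := by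
  ext p
  simp only [Set.mem_setOf_eq, Set.mem_singleton_iff]
  constructor
  · intro h
    have hD : D2 p = 0 := by rw [← (hg p).fderiv]; exact h
    have e : ∀ j : Fin 6, D2 p (Pi.single j 1) = 0 := fun j => by rw [hD]; rfl
    have e0 := e 0; have e1 := e 1; have e2 := e 2
    have e3 := e 3; have e4 := e 4; have e5 := e 5
    simp only [D2, pr, ContinuousLinearMap.add_apply, ContinuousLinearMap.smul_apply,
      ContinuousLinearMap.proj_apply, smul_eq_mul, Pi.single_apply] at e0 e1 e2 e3 e4 e5
    simp (config := { decide := true }) at e0 e1 e2 e3 e4 e5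
    have h1 : p 1 * (2 * p 5 - p 1) = 0 := by
      linear_combination p 1 * e0 - p 1 * e2 + e3 - e5
    have h5 : p 5 * (2 * p 1 - p 5) = 0 := by
      linear_combination (2 * p 1 - p 5) * e0 - p 3 * e2 + e1 - e4
    have hp5 : p 5 = 0 := by
      rcases mul_eq_zero.mp h1 with h | h
      · have h2 : p 5 * p 5 = 0 := by linear_combination 2 * p 5 * h - h5
        exact mul_self_eq_zero.mp h2
      · have h2 : p 5 * p 5 = 0 := by
          linear_combination (1/3 : ℂ) * h5 + (2/3 : ℂ) * p 5 * h
        exact mul_self_eq_zero.mp h2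
    have hp1 : p 1 = 0 := by
      have h2 : p 1 * p 1 = 0 := by linear_combination -h1 + 2 * p 1 * hp5
      exact mul_self_eq_zero.mp h2
    funext i
    fin_cases i <;> simp only [Pi.zero_apply]
    · show p 0 = 0; linear_combination e5 - p 3 * hp1
    · exact hp1
    · show p 2 = 0; linear_combination e4 - p 3 * hp1
    · show p 3 = 0; linear_combination e0 - hp5
    · show p 4 = 0; linear_combination e2 - hp1
    · exact hp5
  · rintro rfl
    rw [(hg 0).fderiv]
    ext v
    simp [D2, pr]
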